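/- Let {G_n}_{n∈ω} be a closed tower of Hausdorff topological groups satisfying the Group Condition (GC). Then for every k ∈ ω the topology induced on G_k by the Bamboo-Shoot topology τ_BS coincides with the original topology of G_k, and G_k is a closed subset of (G, τ_BS). -/

import Mathlib

open Topology Filter Set Pointwise

/-- The finite product `U k · U (k+1) ⋯ U (k+j)` of a sequence of subsets of a group. -/
def bsProd {G : Type*} [Group G] (U : ℕ → Set G) (k : ℕ) : ℕ → Set G
  | 0 => U k
  | j + 1 => bsProd U k j * U (k + (j + 1))

/-- `U⁺[k] = ⋃_{n ≥ k} U k · U (k+1) ⋯ U n`. -/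
def bsPlus {G : Type*} [Group G] (U : ℕ → Set G) (k : ℕ) : Set G :=
  ⋃ j, bsProd U k j

/-- The Bamboo-Shoot set `U[k] = (U⁺[k])⁻¹ · U⁺[k]`. -/
def bsU {G : Type*} [Group G] (U : ℕ → Set G) (k : ℕ) : Set G :=
  (bsPlus U k)⁻¹ * bsPlus U k

/-- A tower of topological groups inside an ambient (abstract) group `G`:
an increasing sequence of subgroups covering `G`, each carrying its own group topology,
such that all inclusions `G_n → G_{n+1}` are continuous. -/
structure GroupTower (G : Type*) [Group G] where
  H : ℕ → Subgroup G
  τ : ∀ n, TopologicalSpace (H n)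
  topGroup : ∀ n, @IsTopologicalGroup (H n) (τ n) _
  mono : ∀ n, H n ≤ H (n + 1)
  union : ∀ g : G, ∃ n, g ∈ H n
  incl_cont : ∀ n, Continuous[τ n, τ (n + 1)] (Subgroup.inclusion (mono n))

namespace GroupTower

variable {G : Type*} [Group G]

/-- The tower is closed: each `G_n` carries the subspace topology from `G_{n+1}`
and is closed in `G_{n+1}`. -/
def IsClosedTower (T : GroupTower G) : Prop :=
  ∀ n, T.τ n = (T.τ (n + 1)).induced (Subgroup.inclusion (T.mono n)) ∧
    IsClosed[T.τ (n + 1)] (Set.range (Subgroup.inclusion (T.mono n)))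

/-- `U` (viewed as a subset of the ambient group) is an open symmetric neighborhood of
the identity in `G_n`. -/
def NsMem (T : GroupTower G) (n : ℕ) (U : Set G) : Prop :=
  U ⊆ (T.H n : Set G) ∧ IsOpen[T.τ n] (((↑) : T.H n → G) ⁻¹' U) ∧ (1 : G) ∈ U ∧ U⁻¹ = U

/-- The Group Condition (GC). -/
def GC (T : GroupTower G) : Prop :=
  ∀ U : ℕ → Set G, (∀ n, T.NsMem n (U n)) → ∀ k : ℕ,
    ∃ V : ℕ → Set G, (∀ n, T.NsMem n (V n)) ∧ bsU V k ⊆ bsPlus U k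

/-- `τBS` is the Bamboo-Shoot topology of the tower: at every point `g` the sets
`g • U[k]` form a neighborhood base. -/
def IsBambooShoot (T : GroupTower G) (τBS : TopologicalSpace G) : Prop :=
  ∀ g : G, (@nhds G τBS g).HasBasis
    (fun p : (ℕ → Set G) × ℕ => ∀ n, T.NsMem n (p.1 n))
    (fun p => g • bsU p.1 p.2)

/-- `τind` is the inductive limit topology of the tower in the category of topological
spaces: a set is open iff its trace on every `G_n` is open. -/
def IsIndTop (T : GroupTower G) (τind : TopologicalSpace G) : Prop :=
  ∀ A : Set G, IsOpen[τind] A ↔ ∀ n, IsOpen[T.τ n] (((↑) : T.H n → G) ⁻¹' A)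

/-- `t` is a group topology on `G` making all the inclusions `G_n → G` continuous. -/
def IsCompatGroupTopology (T : GroupTower G) (t : TopologicalSpace G) : Prop :=
  @IsTopologicalGroup G t _ ∧ ∀ n, Continuous[T.τ n, t] ((↑) : T.H n → G)

/-- `t` coincides with `τ_gr`, i.e. `(G, t) = glim G_n` : `t` is a group topology making
all inclusions continuous, and it is the finest such topology (every open set of any
such topology is `t`-open). -/
def IsGLim (T : GroupTower G) (t : TopologicalSpace G) : Prop :=
  T.IsCompatGroupTopology t ∧
    ∀ t' : TopologicalSpace G, T.IsCompatGroupTopology t' →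
      ∀ A : Set G, IsOpen[t'] A → IsOpen[t] A

end GroupTower

/-- A topological space is Ascoli if every compact subset of `C_k(X, ℝ)` is
equicontinuous. -/
def IsAscoliSpace (X : Type*) [TopologicalSpace X] : Prop :=
  ∀ K : Set C(X, ℝ), IsCompact K → Equicontinuous fun f : K => (f.1 : X → ℝ)

/-- A family of sets is a k-network. -/
def IsKNetwork {X : Type*} [TopologicalSpace X] (N : Set (Set X)) : Prop :=
  ∀ K U : Set X, IsCompact K → IsOpen U → K ⊆ U →
    ∃ F : Set (Set X), F ⊆ N ∧ F.Finite ∧ K ⊆ ⋃₀ F ∧ ⋃₀ F ⊆ U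

/-- A family of sets is locally finite. -/
def IsLocallyFiniteFamily {X : Type*} [TopologicalSpace X] (N : Set (Set X)) : Prop :=
  ∀ x : X, ∃ V ∈ 𝓝 x, {s ∈ N | (s ∩ V).Nonempty}.Finite

/-- An ℵ-space: a regular space with a σ-locally finite k-network. -/
def IsAlephSpace (X : Type*) [TopologicalSpace X] : Prop :=
  RegularSpace X ∧ ∃ N : ℕ → Set (Set X),
    (∀ n, IsLocallyFiniteFamily (N n)) ∧ IsKNetwork (⋃ n, N n)

/-- An ℵ₀-space: a regular space with a countable k-network. -/
def IsAleph0Space (X : Type*) [TopologicalSpace X] : Prop :=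
  RegularSpace X ∧ ∃ N : Set (Set X), N.Countable ∧ IsKNetwork N

/-- A k_ω-space. -/
def IsKOmegaSpace (X : Type*) [TopologicalSpace X] : Prop :=
  ∃ K : ℕ → Set X, (∀ n, IsCompact (K n)) ∧ (∀ n, K n ⊆ K (n + 1)) ∧
    (⋃ n, K n) = Set.univ ∧
    ∀ A : Set X, IsClosed A ↔ ∀ n, IsClosed (((↑) : K n → X) ⁻¹' A)

/-- An MK_ω-space: a k_ω-space witnessed by metrizable compact sets. -/
def IsMKOmegaSpace (X : Type*) [TopologicalSpace X] : Prop :=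
  ∃ K : ℕ → Set X, (∀ n, IsCompact (K n)) ∧
    (∀ n, TopologicalSpace.MetrizableSpace (K n)) ∧ (∀ n, K n ⊆ K (n + 1)) ∧
    (⋃ n, K n) = Set.univ ∧
    ∀ A : Set X, IsClosed A ↔ ∀ n, IsClosed (((↑) : K n → X) ⁻¹' A)

section Aux
open Set Pointwise

variable {G : Type*} [Group G]

lemma one_mem_bsProd {U : ℕ → Set G} (h : ∀ n, (1:G) ∈ U n) (k j : ℕ) :
    (1:G) ∈ bsProd U k j := by
  induction j with
  | zero => exact h k
  | succ j ih => exact ⟨1, ih, 1, h _, mul_one 1⟩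

lemma bsProd_mono_succ {U : ℕ → Set G} (h : ∀ n, (1:G) ∈ U n) (k j : ℕ) :
    bsProd U k j ⊆ bsProd U k (j+1) :=
  fun x hx => ⟨x, hx, 1, h _, mul_one x⟩

lemma subset_bsProd {U : ℕ → Set G} (h : ∀ n, (1:G) ∈ U n) (k j : ℕ) :
    U (k + j) ⊆ bsProd U k j := by
  induction j with
  | zero => exact fun x hx => hx
  | succ j ih => exact fun x hx => ⟨1, one_mem_bsProd h k j, x, hx, one_mul x⟩

lemma one_mem_bsPlus {U : ℕ → Set G} (h : ∀ n, (1:G) ∈ U n) (k : ℕ) :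
    (1:G) ∈ bsPlus U k :=
  Set.mem_iUnion.2 ⟨0, one_mem_bsProd h k 0⟩

lemma bsPlus_subset_bsU {U : ℕ → Set G} (h : ∀ n, (1:G) ∈ U n) (k : ℕ) :
    bsPlus U k ⊆ bsU U k := fun x hx =>
  ⟨1, by simpa using one_mem_bsPlus h k, x, hx, one_mul x⟩

end Aux

namespace GroupTower
open Set Pointwise

variable {G : Type*} [Group G] (T : GroupTower G)

lemma mono_le {k n : ℕ} (h : k ≤ n) : T.H k ≤ T.H n := by
  induction n, h using Nat.le_induction with
  | base => exact le_rfl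
  | succ n hn ih => exact ih.trans (T.mono n)

/-- coe-preimage of a set whose coe-preimage upstairs is open is open downstairs,
using continuity of inclusions. -/
lemma trace_open_of_le {k n : ℕ} (h : k ≤ n) {S : Set G}
    (hS : IsOpen[T.τ n] (((↑) : T.H n → G) ⁻¹' S)) :
    IsOpen[T.τ k] (((↑) : T.H k → G) ⁻¹' S) := by
  induction n, h using Nat.le_induction with
  | base => exact hS
  | succ n hn ih =>
    letI := T.τ n; letI := T.τ (n+1)
    apply ih
    have : (((↑) : T.H n → G) ⁻¹' S) =
        (Subgroup.inclusion (T.mono n)) ⁻¹' (((↑) : T.H (n+1) → G) ⁻¹' S) := rfl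
    rw [this]
    exact (T.incl_cont n).isOpen_preimage _ hS

lemma trace_subgroup_closed (hclosed : T.IsClosedTower) {k n : ℕ} (h : k ≤ n) :
    IsClosed[T.τ n] (((↑) : T.H n → G) ⁻¹' (T.H k : Set G)) := by
  induction n, h using Nat.le_induction with
  | base =>
    letI := T.τ k
    have : (((↑) : T.H k → G) ⁻¹' (T.H k : Set G)) = Set.univ := by
      ext x; simp [x.2]
    rw [this]; exact isClosed_univ
  | succ n hn ih =>
    letI := T.τ n; letI := T.τ (n+1)
    -- preimage = incl '' (preimage in H n) = range incl ∩ F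
    have h1 : T.τ n = (T.τ (n+1)).induced (Subgroup.inclusion (T.mono n)) :=
      (hclosed n).1
    rw [h1, isClosed_induced_iff] at ih
    obtain ⟨F, hF, hFeq⟩ := ih
    have key : (((↑) : T.H (n+1) → G) ⁻¹' (T.H k : Set G)) =
        Set.range (Subgroup.inclusion (T.mono n)) ∩ F := by
      ext x
      constructor
      · intro hx
        have hxn : (x : G) ∈ T.H n := T.mono_le hn hx
        refine ⟨⟨⟨(x:G), hxn⟩, Subtype.ext rfl⟩, ?_⟩
        have : (⟨(x:G), hxn⟩ : T.H n) ∈ (Subgroup.inclusion (T.mono n)) ⁻¹' F := by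
          rw [hFeq]; exact hx
        simpa [Subgroup.inclusion] using this
      · rintro ⟨⟨y, rfl⟩, hxF⟩
        have : y ∈ (Subgroup.inclusion (T.mono n)) ⁻¹' F := hxF
        rw [hFeq] at this
        exact this
    rw [key]
    exact IsClosed.inter (hclosed n).2 hF

end GroupTower

namespace GroupTower
open Set Pointwise

variable {G : Type*} [Group G] (T : GroupTower G)

lemma vnext_open (hclosed : T.IsClosedTower) {m : ℕ} {Wp : Set G}
    (hopen : IsOpen[T.τ m] (((↑) : T.H m → G) ⁻¹' Wp)) :
    IsOpen[T.τ (m+1)] (((↑) : T.H (m+1) → G) ⁻¹'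
      ((T.H (m+1) : Set G) \ ((T.H m : Set G) \ Wp))) := by
  letI := T.τ m; letI := T.τ (m+1)
  rw [(hclosed m).1, isOpen_induced_iff] at hopen
  obtain ⟨O, hO, hOeq⟩ := hopen
  have key : (((↑) : T.H (m+1) → G) ⁻¹' ((T.H (m+1) : Set G) \ ((T.H m : Set G) \ Wp)))
      = (Set.range (Subgroup.inclusion (T.mono m)) \ O)ᶜ := by
    ext x
    simp only [Set.mem_preimage, Set.mem_diff, Set.mem_compl_iff, SetLike.mem_coe]
    constructor
    · rintro ⟨-, hx⟩ ⟨⟨y, rfl⟩, hnO⟩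
      have hcoe : ((Subgroup.inclusion (T.mono m) y : T.H (m+1)) : G) = (y : G) := rfl
      have hym : ((Subgroup.inclusion (T.mono m) y : T.H (m+1)) : G) ∈ T.H m := by
        rw [hcoe]; exact y.2
      have hwp : ((Subgroup.inclusion (T.mono m) y : T.H (m+1)) : G) ∈ Wp := by
        by_contra hnw
        exact hx ⟨hym, hnw⟩
      apply hnO
      show y ∈ ⇑(Subgroup.inclusion (T.mono m)) ⁻¹' O
      rw [hOeq]
      show (y:G) ∈ Wp
      rw [← hcoe]; exact hwp
    · intro hc
      refine ⟨x.2, fun ⟨hxm, hxw⟩ => hc ⟨⟨⟨(x:G), hxm⟩, Subtype.ext rfl⟩, fun hO' => ?_⟩⟩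
      exact hxw (by
        have : (⟨(x:G), hxm⟩ : T.H m) ∈ (Subgroup.inclusion (T.mono m)) ⁻¹' O := hO'
        rw [hOeq] at this; exact this)
  rw [key]
  exact ((hclosed m).2.sdiff hO).isOpen_compl

end GroupTower

namespace GroupTower
open Set Pointwise

variable {G : Type*} [Group G] (T : GroupTower G)

lemma step_exists (m : ℕ) (V : Set G) (hVsub : V ⊆ (T.H m : Set G))
    (hVopen : IsOpen[T.τ m] (((↑) : T.H m → G) ⁻¹' V)) (hV1 : (1:G) ∈ V) :
    ∃ U Wp : Set G, T.NsMem m U ∧ Wp ⊆ (T.H m : Set G) ∧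
      IsOpen[T.τ m] (((↑) : T.H m → G) ⁻¹' Wp) ∧ (1:G) ∈ Wp ∧ U * Wp ⊆ V := by
  letI := T.τ m
  haveI := T.topGroup m
  have hmem : (((↑) : T.H m → G) ⁻¹' V) ∈ 𝓝 (1 : T.H m) :=
    hVopen.mem_nhds (by simpa using hV1)
  obtain ⟨S, hSopen, hS1, hSS⟩ := exists_open_nhds_one_mul_subset hmem
  set Q : Set (T.H m) := S ∩ S⁻¹ with hQ
  have hQopen : IsOpen Q := hSopen.inter hSopen.inv
  have hQ1 : (1 : T.H m) ∈ Q := ⟨hS1, by simpa using hS1⟩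
  have hQinv : Q⁻¹ = Q := by
    ext x; simp only [hQ, Set.mem_inv, Set.mem_inter_iff]
    constructor
    · rintro ⟨h1, h2⟩; exact ⟨by simpa using h2, h1⟩
    · rintro ⟨h1, h2⟩; exact ⟨h2, by simpa using h1⟩
  refine ⟨((↑) : T.H m → G) '' Q, ((↑) : T.H m → G) '' Q, ⟨?_, ?_, ?_, ?_⟩, ?_, ?_, ?_, ?_⟩
  · rintro x ⟨a, -, rfl⟩; exact a.2
  · rw [Set.preimage_image_eq _ Subtype.val_injective]; exact hQopen
  · exact ⟨1, hQ1, rfl⟩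
  · ext x
    simp only [Set.mem_inv, Set.mem_image]
    constructor
    · rintro ⟨a, ha, hax⟩
      refine ⟨a⁻¹, ?_, ?_⟩
      · rw [← hQinv]; simpa using ha
      · have : ((a⁻¹ : T.H m) : G) = ((a : G))⁻¹ := rfl
        rw [this, hax]; simp
    · rintro ⟨a, ha, rfl⟩
      refine ⟨a⁻¹, ?_, ?_⟩
      · rw [← hQinv]; simpa using ha
      · simp
  · rintro x ⟨a, -, rfl⟩; exact a.2
  · rw [Set.preimage_image_eq _ Subtype.val_injective]; exact hQopen
  · exact ⟨1, hQ1, rfl⟩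
  · rintro x ⟨u, ⟨a, ha, rfl⟩, w, ⟨b, hb, rfl⟩, rfl⟩
    have : a * b ∈ ((↑) : T.H m → G) ⁻¹' V := hSS ⟨a, ha.1, b, hb.1, rfl⟩
    exact this

end GroupTower

namespace GroupTower
open Set Pointwise

variable {G : Type*} [Group G] (T : GroupTower G)

lemma nsMem_coe (n : ℕ) : T.NsMem n (T.H n : Set G) := by
  refine ⟨subset_rfl, ?_, (T.H n).one_mem, ?_⟩
  · letI := T.τ n
    have : (((↑) : T.H n → G) ⁻¹' (T.H n : Set G)) = Set.univ := by
      ext x; simp [x.2]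
    rw [this]; exact isOpen_univ
  · ext x
    simp only [Set.mem_inv, SetLike.mem_coe]
    exact ⟨fun h => by simpa using inv_mem h, fun h => inv_mem h⟩

lemma lemmaA (hclosed : T.IsClosedTower) (k : ℕ) (W : Set G)
    (hWsub : W ⊆ (T.H k : Set G)) (hWopen : IsOpen[T.τ k] (((↑) : T.H k → G) ⁻¹' W))
    (hW1 : (1:G) ∈ W) :
    ∃ U : ℕ → Set G, (∀ n, T.NsMem n (U n)) ∧ bsPlus U k ∩ (T.H k : Set G) ⊆ W := by
  classical
  have step : ∀ (m : ℕ) (V : Set G), V ⊆ (T.H m : Set G) →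
      IsOpen[T.τ m] (((↑) : T.H m → G) ⁻¹' V) → (1:G) ∈ V →
      ∃ U Wp : Set G, T.NsMem m U ∧ (Wp ⊆ (T.H m : Set G) ∧
        IsOpen[T.τ m] (((↑) : T.H m → G) ⁻¹' Wp) ∧ (1:G) ∈ Wp) ∧ U * Wp ⊆ V ∧
        (((T.H (m+1) : Set G) \ ((T.H m : Set G) \ Wp)) ⊆ (T.H (m+1) : Set G) ∧
         IsOpen[T.τ (m+1)] (((↑) : T.H (m+1) → G) ⁻¹'
            ((T.H (m+1) : Set G) \ ((T.H m : Set G) \ Wp))) ∧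
         (1:G) ∈ ((T.H (m+1) : Set G) \ ((T.H m : Set G) \ Wp))) := by
    intro m V h1 h2 h3
    obtain ⟨U, Wp, hU, hWsub', hWopen', hW1', hmul⟩ := T.step_exists m V h1 h2 h3
    refine ⟨U, Wp, hU, ⟨hWsub', hWopen', hW1'⟩, hmul,
      Set.diff_subset, T.vnext_open hclosed hWopen', ⟨(T.H (m+1)).one_mem, ?_⟩⟩
    rintro ⟨-, hno⟩; exact hno hW1'
  choose Uf Wf hUf hWfP hmulf hVP using step
  let Pr : ℕ → Set G → Prop := fun m V => V ⊆ (T.H m : Set G) ∧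
      IsOpen[T.τ m] (((↑) : T.H m → G) ⁻¹' V) ∧ (1:G) ∈ V
  let F : ∀ _ : ℕ, {V : Set G // Pr (k + ‹ℕ›) V} := fun j =>
    Nat.rec (motive := fun j => {V : Set G // Pr (k + j) V})
      ⟨W, hWsub, hWopen, hW1⟩
      (fun j ih => ⟨_, hVP (k + j) ih.1 ih.2.1 ih.2.2.1 ih.2.2.2⟩) j
  let Vj : ℕ → Set G := fun j => (F j).1
  let Wj : ℕ → Set G := fun j => Wf (k+j) (Vj j) (F j).2.1 (F j).2.2.1 (F j).2.2.2
  let Uj : ℕ → Set G := fun j => Uf (k+j) (Vj j) (F j).2.1 (F j).2.2.1 (F j).2.2.2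
  let Useq : ℕ → Set G := fun n => if h : k ≤ n then Uj (n - k) else (T.H n : Set G)
  have hV0 : Vj 0 = W := rfl
  have hVsucc : ∀ j, Vj (j+1) = (T.H (k+j+1) : Set G) \ ((T.H (k+j) : Set G) \ Wj j) :=
    fun j => rfl
  have hUjW : ∀ j, Uj j * Wj j ⊆ Vj j := fun j => hmulf (k+j) _ _ _ _
  have hUjNs : ∀ j, T.NsMem (k+j) (Uj j) := fun j => hUf (k+j) _ _ _ _
  have hWj1 : ∀ j, (1:G) ∈ Wj j := fun j => (hWfP (k+j) _ _ _ _).2.2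
  have hUjsubV : ∀ j, Uj j ⊆ Vj j := fun j x hx => hUjW j ⟨x, hx, 1, hWj1 j, mul_one x⟩
  have hVcap : ∀ j, Vj (j+1) ∩ (T.H (k+j) : Set G) ⊆ Wj j := by
    intro j x hx
    rw [hVsucc j] at hx
    obtain ⟨⟨-, hnd⟩, hm⟩ := hx
    by_contra hc
    exact hnd ⟨hm, hc⟩
  have hUseq : ∀ j, Useq (k+j) = Uj j := by
    intro j
    simp only [Useq, dif_pos (Nat.le_add_right k j), Nat.add_sub_cancel_left]
  have hNs : ∀ n, T.NsMem n (Useq n) := by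
    intro n
    by_cases h : k ≤ n
    · obtain ⟨j, rfl⟩ := Nat.exists_eq_add_of_le h
      rw [hUseq]; exact hUjNs j
    · simp only [Useq, dif_neg h]; exact T.nsMem_coe n
  have hbsub : ∀ j, bsProd Useq k j ⊆ (T.H (k+j) : Set G) := by
    intro j
    induction j with
    | zero =>
      intro x hx
      have : x ∈ Uj 0 := by rw [← hUseq 0]; exact hx
      exact (hUjNs 0).1 this
    | succ j ih =>
      rintro x ⟨p, hp, u, hu, rfl⟩
      have hpm : p ∈ T.H (k+(j+1)) := T.mono_le (Nat.le_succ _) (ih hp)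
      have hum : u ∈ T.H (k+(j+1)) := (hNs (k+(j+1))).1 hu
      exact mul_mem hpm hum
  -- the peeling argument
  have peel : ∀ j, (Nat.casesOn j (Vj 0) (fun i => bsProd Useq k i * Vj (i+1)) : Set G)
      ∩ (T.H k : Set G) ⊆ W := by
    intro j
    induction j with
    | zero => intro x hx; rw [← hV0]; exact hx.1
    | succ j ih =>
      rintro x ⟨⟨p, hp, v, hv, rfl⟩, hxk⟩
      have hpH : p ∈ T.H (k+j) := hbsub j hp
      have hxH : p * v ∈ T.H (k+j) := T.mono_le (Nat.le_add_right k j) hxk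
      have hvH : v ∈ T.H (k+j) := by
        have hv' : v = p⁻¹ * (p * v) := by group
        rw [hv']
        exact mul_mem (inv_mem hpH) hxH
      have hvW : v ∈ Wj j := hVcap j ⟨hv, hvH⟩
      cases j with
      | zero =>
        have hp0 : p ∈ Uj 0 := by rw [← hUseq 0]; exact hp
        have : p * v ∈ Vj 0 := hUjW 0 ⟨p, hp0, v, hvW, rfl⟩
        rw [← hV0]; exact this
      | succ i =>
        obtain ⟨q, hq, u, hu, rfl⟩ := hp
        have huj : u ∈ Uj (i+1) := by rw [← hUseq (i+1)]; exact hu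
        have huv : u * v ∈ Vj (i+1) := hUjW (i+1) ⟨u, huj, v, hvW, rfl⟩
        refine ih ⟨⟨q, hq, u * v, huv, ?_⟩, ?_⟩
        · exact (mul_assoc q u v).symm
        · exact hxk
  refine ⟨Useq, hNs, ?_⟩
  rintro x ⟨hx, hxk⟩
  obtain ⟨j, hj⟩ := Set.mem_iUnion.1 hx
  cases j with
  | zero =>
    have : x ∈ Uj 0 := by rw [← hUseq 0]; exact hj
    exact peel 0 ⟨hUjsubV 0 this, hxk⟩
  | succ i =>
    obtain ⟨q, hq, u, hu, rfl⟩ := hj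
    have huj : u ∈ Uj (i+1) := by rw [← hUseq (i+1)]; exact hu
    exact peel (i+1) ⟨⟨q, hq, u, hUjsubV (i+1) huj, rfl⟩, hxk⟩

end GroupTower


/-- For a closed tower of Hausdorff groups satisfying (GC), the Bamboo-Shoot
topology induces on each `G_k` its original topology, and each `G_k` is `τBS`-closed. -/
theorem statement_1 {G : Type*} [Group G] (T : GroupTower G)
    (hclosed : T.IsClosedTower)
    (hT2 : ∀ n, @T2Space (T.H n) (T.τ n))
    (hGC : T.GC)
    (τBS : TopologicalSpace G) (hBS : T.IsBambooShoot τBS) :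
    ∀ k : ℕ, T.τ k = τBS.induced ((↑) : T.H k → G) ∧ IsClosed[τBS] (T.H k : Set G) := by
  intro k
  constructor
  · -- equality of topologies
    have hcont : Continuous[T.τ k, τBS] ((↑) : T.H k → G) := by
      letI := T.τ k
      letI : TopologicalSpace G := τBS
      haveI := T.topGroup k
      rw [continuous_def]
      intro A hA
      rw [isOpen_iff_mem_nhds]
      intro x hx
      have hAx : A ∈ 𝓝 (↑x : G) := hA.mem_nhds hx
      obtain ⟨p, hp, hsub⟩ := ((hBS ↑x).mem_iff).1 hAx
      have h1 : ∀ n, (1:G) ∈ p.1 n := fun n => (hp n).2.2.1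
      set j := max p.2 k with hj
      have hUsub : p.1 j ⊆ bsU p.1 p.2 := by
        have h2 : p.1 (p.2 + (j - p.2)) ⊆ bsProd p.1 p.2 (j - p.2) :=
          subset_bsProd h1 p.2 (j - p.2)
        rw [Nat.add_sub_cancel' (le_max_left p.2 k)] at h2
        exact h2.trans ((Set.subset_iUnion _ (j - p.2)).trans (bsPlus_subset_bsU h1 p.2))
      have hxA : (↑x : G) • p.1 j ⊆ A := (Set.smul_set_mono hUsub).trans hsub
      have hopen : IsOpen (((↑) : T.H k → G) ⁻¹' (p.1 j)) :=
        T.trace_open_of_le (le_max_right p.2 k) (hp j).2.1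
      have hSeq : ((fun y : T.H k => x⁻¹ * y) ⁻¹' (((↑) : T.H k → G) ⁻¹' (p.1 j)))
          = ((↑) : T.H k → G) ⁻¹' ((↑x : G) • p.1 j) := by
        ext y
        simp only [Set.mem_preimage, Set.mem_smul_set_iff_inv_smul_mem, smul_eq_mul]
        push_cast
        exact Iff.rfl
      have hopen2 : IsOpen ((fun y : T.H k => x⁻¹ * y) ⁻¹' (((↑) : T.H k → G) ⁻¹' (p.1 j))) :=
        (continuous_const.mul continuous_id).isOpen_preimage _ hopen
      have hmemS : x ∈ (fun y : T.H k => x⁻¹ * y) ⁻¹' (((↑) : T.H k → G) ⁻¹' (p.1 j)) := by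
        show ((x⁻¹ * x : T.H k) : G) ∈ p.1 j
        rw [inv_mul_cancel]
        simpa using h1 j
      refine Filter.mem_of_superset (hopen2.mem_nhds hmemS) ?_
      rw [hSeq]
      exact fun y hy => hxA hy
    refine le_antisymm (continuous_iff_le_induced.mp hcont) ?_
    rw [le_iff_nhds]
    intro x
    intro s hs
    rw [@nhds_induced G (T.H k) τBS]
    letI := T.τ k
    haveI := T.topGroup k
    obtain ⟨t, hts, htopen, hxt⟩ := mem_nhds_iff.1 hs
    -- W is the coe-image of x⁻¹ • t
    set W : Set G := ((↑) : T.H k → G) '' ((fun y : T.H k => x⁻¹ * y) '' t) with hWdef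
    have hWsub : W ⊆ (T.H k : Set G) := by
      rintro w ⟨a, -, rfl⟩; exact a.2
    have hW1 : (1:G) ∈ W := ⟨x⁻¹ * x, ⟨x, hxt, rfl⟩, by simp⟩
    have hWpre : (((↑) : T.H k → G) ⁻¹' W) = (fun y : T.H k => x * y) ⁻¹' t := by
      rw [hWdef, Set.preimage_image_eq _ Subtype.val_injective]
      ext y
      simp only [Set.mem_image, Set.mem_preimage]
      constructor
      · rintro ⟨a, ha, hay⟩
        have : a = x * y := by
          have h2 := congrArg (fun z => x * z) hay
          simpa using h2
        rwa [← this]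
      · intro h
        exact ⟨x * y, h, by simp [mul_assoc]⟩
    have hWopen : IsOpen (((↑) : T.H k → G) ⁻¹' W) := by
      rw [hWpre]
      exact (continuous_const.mul continuous_id).isOpen_preimage _ htopen
    obtain ⟨U, hUNs, hUcap⟩ := T.lemmaA hclosed k W hWsub hWopen hW1
    obtain ⟨V, hVNs, hVsub⟩ := hGC U hUNs k
    refine Filter.mem_comap.2 ⟨(↑x : G) • bsU V k, (hBS ↑x).mem_of_mem (i := (V, k)) hVNs, ?_⟩
    intro y hy
    have hb : (↑x : G)⁻¹ * ↑y ∈ bsPlus U k := by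
      have hy' : (↑y : G) ∈ (↑x : G) • bsU V k := hy
      rw [Set.mem_smul_set_iff_inv_smul_mem, smul_eq_mul] at hy'
      exact hVsub hy'
    have hbH : ((x⁻¹ * y : T.H k) : G) ∈ W := hUcap ⟨by push_cast; exact hb, (x⁻¹ * y).2⟩
    have : x⁻¹ * y ∈ ((↑) : T.H k → G) ⁻¹' W := hbH
    rw [hWpre] at this
    have : x * (x⁻¹ * y) ∈ t := this
    rw [← mul_assoc, mul_inv_cancel, one_mul] at this
    exact hts this
  · letI : TopologicalSpace G := τBS
    rw [← isOpen_compl_iff]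
    rw [isOpen_iff_mem_nhds]
    intro g hg
    obtain ⟨m, hm⟩ := T.union g
    set n := max m k with hn
    have hgn : g ∈ T.H n := T.mono_le (le_max_left m k) hm
    have hkn : k ≤ n := le_max_right m k
    letI := T.τ n
    haveI := T.topGroup n
    set W : Set G := (T.H n : Set G) \ (g⁻¹ • (T.H k : Set G)) with hWdef
    have hWsub : W ⊆ (T.H n : Set G) := Set.diff_subset
    have hW1 : (1:G) ∈ W := by
      refine ⟨(T.H n).one_mem, fun hc => hg ?_⟩
      rw [Set.mem_smul_set_iff_inv_smul_mem] at hc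
      simpa using hc
    have hWopen : IsOpen (((↑) : T.H n → G) ⁻¹' W) := by
      have hkey : (((↑) : T.H n → G) ⁻¹' (g⁻¹ • (T.H k : Set G)))
          = (fun y : T.H n => (⟨g, hgn⟩ : T.H n) * y) ⁻¹' (((↑) : T.H n → G) ⁻¹' (T.H k : Set G)) := by
        ext y
        simp only [Set.mem_preimage, Set.mem_smul_set_iff_inv_smul_mem, smul_eq_mul, inv_inv]
        exact Iff.rfl
      have hclosed' : IsClosed (((↑) : T.H n → G) ⁻¹' (g⁻¹ • (T.H k : Set G))) := by
        rw [hkey]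
        exact IsClosed.preimage (continuous_const.mul continuous_id)
          (T.trace_subgroup_closed hclosed hkn)
      have : (((↑) : T.H n → G) ⁻¹' W) = (((↑) : T.H n → G) ⁻¹' (g⁻¹ • (T.H k : Set G)))ᶜ := by
        ext y
        simp [hWdef, y.2]
      rw [this]
      exact hclosed'.isOpen_compl
    obtain ⟨U, hUNs, hUcap⟩ := T.lemmaA hclosed n W hWsub hWopen hW1
    obtain ⟨V, hVNs, hVsub⟩ := hGC U hUNs n
    refine Filter.mem_of_superset ((hBS g).mem_of_mem (i := (V, n)) hVNs) ?_
    intro a ha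
    rw [Set.mem_smul_set_iff_inv_smul_mem, smul_eq_mul] at ha
    intro hak
    have hbH : g⁻¹ * a ∈ g⁻¹ • (T.H k : Set G) := by
      rw [Set.mem_smul_set_iff_inv_smul_mem]
      simpa using hak
    have hbn : g⁻¹ * a ∈ (T.H n : Set G) :=
      mul_mem (inv_mem hgn) (T.mono_le hkn hak)
    have : g⁻¹ * a ∈ W := hUcap ⟨hVsub ha, hbn⟩
    exact this.2 hbH
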